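/- Let x, x' ∈ ℝ^d and suppose the ELLIPS score at x has a unique maximizing class i_*. Then score(x', i_*) − max_{i≠i_*} score(x', i) ≥ m(x) + λ_min·‖x'−x‖₂² − 2·c_M(x)·‖x'−x‖₂, where m(x) is the margin at x, c_M(x) = max_{i≠i_*} ‖Σ_{i_*}⁻¹(x−μ_{i_*}) − Σ_i⁻¹(x−μ_i)‖₂, and λ_min = min_{i≠i_*} λ_min(Σ_i⁻¹ − Σ_{i_*}⁻¹). -/

import Mathlib

open Matrix Real

/-- The Euclidean (ℓ₂) norm of a vector in `Fin d → ℝ`. -/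
noncomputable def l2norm {d : ℕ} (v : Fin d → ℝ) : ℝ :=
  Real.sqrt (v ⬝ᵥ v)

/-- The smallest eigenvalue of a symmetric matrix, given by the Rayleigh quotient
characterization: the infimum of `vᵀ M v` over unit vectors `v`. -/
noncomputable def minEig {d : ℕ} (M : Matrix (Fin d) (Fin d) ℝ) : ℝ :=
  ⨅ v : {v : Fin d → ℝ // v ⬝ᵥ v = 1}, (v : Fin d → ℝ) ⬝ᵥ (M *ᵥ (v : Fin d → ℝ))

/-- The ELLIPS score of class `i` at point `x`:
`score(x, i) = −(x−μᵢ)ᵀΣᵢ⁻¹(x−μᵢ) − log det Σᵢ + 2 log πᵢ`. -/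
noncomputable def score {d K : ℕ} (μ : Fin K → Fin d → ℝ)
    (S : Fin K → Matrix (Fin d) (Fin d) ℝ) (pri : Fin K → ℝ)
    (x : Fin d → ℝ) (i : Fin K) : ℝ :=
  -((x - μ i) ⬝ᵥ ((S i)⁻¹ *ᵥ (x - μ i))) - Real.log (S i).det + 2 * Real.log (pri i)
/-!
Write `x' = x + δ`. Since every `Σᵢ⁻¹` is symmetric, each score is exactly quadratic in `δ`, and
`score(x', i⋆) − score(x', i)` is the same difference at `x`, plus `δᵀ(Σᵢ⁻¹ − Σᵢ⋆⁻¹)δ`, minus twice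
the pairing of `δ` with `Σᵢ⋆⁻¹(x − μᵢ⋆) − Σᵢ⁻¹(x − μᵢ)`. The Rayleigh characterisation bounds the
quadratic term below by `λ_min ‖δ‖²`, Cauchy–Schwarz bounds the linear term by `2 c_M ‖δ‖`, and
taking the worst class `i ≠ i⋆` on both sides gives the margin bound.
-/

open scoped RealInnerProductSpace

lemma Matrix.IsSymm.dotProduct_mulVec_comm {n R : Type*} [Fintype n] [CommSemiring R]
    {A : Matrix n n R} (hA : A.IsSymm) (v w : n → R) : v ⬝ᵥ A *ᵥ w = w ⬝ᵥ A *ᵥ v := by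
  rw [dotProduct_mulVec, ← mulVec_transpose, hA.eq, dotProduct_comm]

lemma Matrix.IsSymm.add_dotProduct_mulVec_add {n R : Type*} [Fintype n] [CommRing R]
    {A : Matrix n n R} (hA : A.IsSymm) (v w : n → R) :
    (v + w) ⬝ᵥ A *ᵥ (v + w) = v ⬝ᵥ A *ᵥ v + 2 * (w ⬝ᵥ A *ᵥ v) + w ⬝ᵥ A *ᵥ w := by
  rw [mulVec_add, dotProduct_add, add_dotProduct, add_dotProduct, hA.dotProduct_mulVec_comm v w]
  ring

section Euclidean

variable {d : ℕ}

lemma l2norm_nonneg (v : Fin d → ℝ) : 0 ≤ l2norm v := Real.sqrt_nonneg _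

lemma l2norm_sq (v : Fin d → ℝ) : l2norm v ^ 2 = v ⬝ᵥ v :=
  Real.sq_sqrt (by simpa using dotProduct_star_self_nonneg v)

lemma l2norm_eq_norm (v : Fin d → ℝ) : l2norm v = ‖WithLp.toLp 2 v‖ := by
  rw [EuclideanSpace.norm_eq, l2norm, dotProduct]
  simp [sq]

lemma dotProduct_eq_inner (v w : Fin d → ℝ) : v ⬝ᵥ w = ⟪WithLp.toLp 2 v, WithLp.toLp 2 w⟫ := by
  simp [EuclideanSpace.inner_eq_star_dotProduct, dotProduct_comm]

lemma dotProduct_le_l2norm_mul (v w : Fin d → ℝ) : v ⬝ᵥ w ≤ l2norm v * l2norm w := by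
  rw [dotProduct_eq_inner, l2norm_eq_norm, l2norm_eq_norm]
  exact real_inner_le_norm _ _

lemma neg_opNorm_mul_le_dotProduct_mulVec (M : Matrix (Fin d) (Fin d) ℝ) (v : Fin d → ℝ) :
    -‖toEuclideanCLM (𝕜 := ℝ) M‖ * l2norm v ^ 2 ≤ v ⬝ᵥ M *ᵥ v := by
  rw [dotProduct_eq_inner, l2norm_eq_norm, ← toEuclideanCLM_toLp, neg_mul, neg_le, sq, ← mul_assoc]
  calc -⟪WithLp.toLp 2 v, toEuclideanCLM (𝕜 := ℝ) M (WithLp.toLp 2 v)⟫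
      ≤ ‖WithLp.toLp 2 v‖ * ‖toEuclideanCLM (𝕜 := ℝ) M (WithLp.toLp 2 v)‖ :=
        (neg_le_abs _).trans (abs_real_inner_le_norm _ _)
    _ ≤ _ := by
        rw [mul_comm ‖toEuclideanCLM (𝕜 := ℝ) M‖, mul_assoc]
        gcongr
        exact (toEuclideanCLM (𝕜 := ℝ) M).le_opNorm _

lemma bddBelow_range_rayleigh (M : Matrix (Fin d) (Fin d) ℝ) :
    BddBelow (Set.range fun v : {v : Fin d → ℝ // v ⬝ᵥ v = 1} => (v : Fin d → ℝ) ⬝ᵥ M *ᵥ v) := by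
  refine ⟨-‖toEuclideanCLM (𝕜 := ℝ) M‖, ?_⟩
  rintro _ ⟨⟨v, hv⟩, rfl⟩
  simpa [l2norm, hv] using neg_opNorm_mul_le_dotProduct_mulVec M v

lemma minEig_mul_l2norm_sq_le (M : Matrix (Fin d) (Fin d) ℝ) (v : Fin d → ℝ) :
    minEig M * l2norm v ^ 2 ≤ v ⬝ᵥ M *ᵥ v := by
  rcases eq_or_ne v 0 with rfl | hv
  · simp [l2norm]
  have hn : 0 < l2norm v := by
    rw [l2norm_eq_norm]
    exact norm_pos_iff.mpr (by simpa using hv)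
  set u := (l2norm v)⁻¹ • v with hu_def
  have hu : u ⬝ᵥ u = 1 := by
    rw [hu_def, smul_dotProduct, dotProduct_smul, smul_eq_mul, smul_eq_mul, ← l2norm_sq]
    field_simp
  have hvu : v = l2norm v • u := by simp [u, hn.ne']
  calc minEig M * l2norm v ^ 2 ≤ (u ⬝ᵥ M *ᵥ u) * l2norm v ^ 2 :=
        mul_le_mul_of_nonneg_right (ciInf_le (bddBelow_range_rayleigh M) ⟨u, hu⟩) (sq_nonneg _)
    _ = v ⬝ᵥ M *ᵥ v := by
        conv_rhs => rw [hvu, mulVec_smul, smul_dotProduct, dotProduct_smul]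
        simp only [smul_eq_mul]; ring

end Euclidean

section Score

variable {d K : ℕ} (μ : Fin K → Fin d → ℝ) (S : Fin K → Matrix (Fin d) (Fin d) ℝ) (pri : Fin K → ℝ)

lemma score_add {i : Fin K} (hS : (S i).IsSymm) (x δ : Fin d → ℝ) :
    score μ S pri (x + δ) i =
      score μ S pri x i - 2 * (δ ⬝ᵥ (S i)⁻¹ *ᵥ (x - μ i)) - δ ⬝ᵥ (S i)⁻¹ *ᵥ δ := by
  rw [score, score, add_sub_right_comm, hS.inv.add_dotProduct_mulVec_add]
  ring

lemma score_sub_score_ge {i j : Fin K} (hi : (S i).IsSymm) (hj : (S j).IsSymm)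
    (x x' : Fin d → ℝ) :
    score μ S pri x j - score μ S pri x i + minEig ((S i)⁻¹ - (S j)⁻¹) * l2norm (x' - x) ^ 2
      - 2 * l2norm ((S j)⁻¹ *ᵥ (x - μ j) - (S i)⁻¹ *ᵥ (x - μ i)) * l2norm (x' - x)
      ≤ score μ S pri x' j - score μ S pri x' i := by
  obtain ⟨δ, rfl⟩ : ∃ δ, x' = x + δ := ⟨x' - x, by abel⟩
  have hquad := minEig_mul_l2norm_sq_le ((S i)⁻¹ - (S j)⁻¹) δ
  have hlin := dotProduct_le_l2norm_mul δ ((S j)⁻¹ *ᵥ (x - μ j) - (S i)⁻¹ *ᵥ (x - μ i))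
  rw [sub_mulVec, dotProduct_sub] at hquad
  rw [dotProduct_sub] at hlin
  rw [add_sub_cancel_left, score_add μ S pri hi, score_add μ S pri hj]
  linarith

end Score

theorem stmt5_general {d K : ℕ} (hK : 2 ≤ K)
    (μ : Fin K → Fin d → ℝ) (S : Fin K → Matrix (Fin d) (Fin d) ℝ)
    (pri : Fin K → ℝ) (hS : ∀ i, (S i).PosDef)
    (x x' : Fin d → ℝ) (istar : Fin K) :
    score μ S pri x' istar - (⨆ i : {i : Fin K // i ≠ istar}, score μ S pri x' i) ≥
      (score μ S pri x istar - ⨆ i : {i : Fin K // i ≠ istar}, score μ S pri x i)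
      + (⨅ i : {i : Fin K // i ≠ istar}, minEig ((S i)⁻¹ - (S istar)⁻¹))
          * (l2norm (x' - x)) ^ 2
      - 2 * (⨆ i : {i : Fin K // i ≠ istar},
          l2norm ((S istar)⁻¹ *ᵥ (x - μ istar) - (S i)⁻¹ *ᵥ (x - μ i)))
          * l2norm (x' - x) := by
  have hsymm i : (S i).IsSymm := isHermitian_iff_isSymm.mp (hS i).isHermitian
  obtain ⟨j, hj⟩ := Fintype.exists_ne_of_one_lt_card (by rw [Fintype.card_fin]; omega) istar
  -- `K ≥ 2` keeps the `⨆` below away from its junk value `0` over an empty index type.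
  have : Nonempty {i : Fin K // i ≠ istar} := ⟨⟨j, hj⟩⟩
  rw [ge_iff_le, le_sub_comm]
  refine ciSup_le fun i => ?_
  have hscore := le_ciSup (Finite.bddAbove_range fun i : {i // i ≠ istar} => score μ S pri x i) i
  have heig := ciInf_le (Finite.bddBelow_range
    fun i : {i // i ≠ istar} => minEig ((S i)⁻¹ - (S istar)⁻¹)) i
  have hgrad := le_ciSup (Finite.bddAbove_range fun i : {i // i ≠ istar} =>
    l2norm ((S istar)⁻¹ *ᵥ (x - μ istar) - (S i)⁻¹ *ᵥ (x - μ i))) i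
  have hδ := l2norm_nonneg (x' - x)
  have hclass := score_sub_score_ge μ S pri (hsymm i) (hsymm istar) x x'
  have heig' := mul_le_mul_of_nonneg_right heig (sq_nonneg (l2norm (x' - x)))
  have hgrad' := mul_le_mul_of_nonneg_right hgrad hδ
  linarith

theorem stmt5 {d K : ℕ} (hd : 1 ≤ d) (hK : 2 ≤ K)
    (μ : Fin K → Fin d → ℝ) (S : Fin K → Matrix (Fin d) (Fin d) ℝ)
    (pri : Fin K → ℝ) (hpri : ∀ i, 0 < pri i) (hS : ∀ i, (S i).PosDef)
    (x x' : Fin d → ℝ) (istar : Fin K)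
    (hmax : ∀ i, i ≠ istar → score μ S pri x i < score μ S pri x istar) :
    score μ S pri x' istar - (⨆ i : {i : Fin K // i ≠ istar}, score μ S pri x' i) ≥
      (score μ S pri x istar - ⨆ i : {i : Fin K // i ≠ istar}, score μ S pri x i)
      + (⨅ i : {i : Fin K // i ≠ istar}, minEig ((S i)⁻¹ - (S istar)⁻¹))
          * (l2norm (x' - x)) ^ 2
      - 2 * (⨆ i : {i : Fin K // i ≠ istar},
          l2norm ((S istar)⁻¹ *ᵥ (x - μ istar) - (S i)⁻¹ *ᵥ (x - μ i)))
          * l2norm (x' - x) :=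
  stmt5_general hK μ S pri hS x x' istar
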